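/- The symmetrized bidisc 𝔾₂ is an analytic retract of the tetrablock 𝔼: the maps θ : 𝔾₂ → 𝔼, (s,p) ↦ (s/2, s/2, p), and ι : 𝔼 → 𝔾₂, (x₁,x₂,x₃) ↦ (x₁+x₂, x₃), are well-defined holomorphic maps with ι ∘ θ = id_{𝔾₂}. -/

import Mathlib

open Complex Metric

/-- The symmetrized bidisc `𝔾₂ = {(s,p) : 1 - s z + p z² ≠ 0 for all z ∈ 𝔻̄}`. -/
def SymBidisc : Set (ℂ × ℂ) :=
  {x | ∀ z ∈ closedBall (0 : ℂ) 1, 1 - x.1 * z + x.2 * z ^ 2 ≠ 0}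

/-- The tetrablock `𝔼 = {(x₁,x₂,x₃) : 1 - x₁z₁ - x₂z₂ + x₃z₁z₂ ≠ 0 for all z₁,z₂ ∈ 𝔻̄}`. -/
def Tetrablock : Set (ℂ × ℂ × ℂ) :=
  {x | ∀ z₁ ∈ closedBall (0 : ℂ) 1, ∀ z₂ ∈ closedBall (0 : ℂ) 1,
    1 - x.1 * z₁ - x.2.1 * z₂ + x.2.2 * z₁ * z₂ ≠ 0}

/-! If `(s, p) ∈ 𝔾₂` then `s = u + v`, `p = u v` with `u, v ∈ 𝔻`, and
`(1 - u z₁)(1 - u z₂)(φ(z₁) + φ(z₂)) = 2 (1 - |u|²)(1 - (s/2) z₁ - (s/2) z₂ + p z₁ z₂)`, where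
`φ(z) = (1 - |u|²)(1 - v z)/(1 - u z)`. The identity
`(1 - |u|²)(1 - v z) = (1 - ū v)(1 - u z) + (u - v)(z - ū)` shows that `φ` maps `𝔻̄` into the disc
of radius `|u - v|` about `1 - ū v`, and `|u - v| < |1 - ū v|`, so two values of `φ` cannot cancel. -/

open ComplexConjugate

lemma norm_sq_one_sub_conj_mul_sub_norm_sq_sub (a b : ℂ) :
    ‖1 - conj a * b‖ ^ 2 - ‖a - b‖ ^ 2 = (1 - ‖a‖ ^ 2) * (1 - ‖b‖ ^ 2) := by
  simp only [← normSq_eq_norm_sq, normSq_apply, sub_re, sub_im, mul_re, mul_im, one_re, one_im,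
    conj_re, conj_im]
  ring

lemma norm_sub_le_norm_one_sub_conj_mul {a b : ℂ} (ha : ‖a‖ ≤ 1) (hb : ‖b‖ ≤ 1) :
    ‖a - b‖ ≤ ‖1 - conj a * b‖ := by
  have h := norm_sq_one_sub_conj_mul_sub_norm_sq_sub a b
  have : 0 ≤ (1 - ‖a‖ ^ 2) * (1 - ‖b‖ ^ 2) :=
    mul_nonneg (by nlinarith [norm_nonneg a]) (by nlinarith [norm_nonneg b])
  exact pow_le_pow_iff_left₀ (norm_nonneg _) (norm_nonneg _) two_ne_zero |>.mp (by linarith)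

lemma norm_sub_lt_norm_one_sub_conj_mul {a b : ℂ} (ha : ‖a‖ < 1) (hb : ‖b‖ < 1) :
    ‖a - b‖ < ‖1 - conj a * b‖ := by
  have h := norm_sq_one_sub_conj_mul_sub_norm_sq_sub a b
  have : 0 < (1 - ‖a‖ ^ 2) * (1 - ‖b‖ ^ 2) :=
    mul_pos (by nlinarith [norm_nonneg a]) (by nlinarith [norm_nonneg b])
  exact pow_lt_pow_iff_left₀ (norm_nonneg _) (norm_nonneg _) two_ne_zero |>.mp (by linarith)

lemma add_ne_zero_of_mem_closedBall {E : Type*} [SeminormedAddCommGroup E] [NormedSpace ℝ E]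
    {c x y : E} {r : ℝ} (hr : r < ‖c‖) (hx : x ∈ closedBall c r) (hy : y ∈ closedBall c r) :
    x + y ≠ 0 := by
  intro hxy
  rw [mem_closedBall_iff_norm, eq_neg_of_add_eq_zero_left hxy, ← neg_add', norm_neg] at hx
  rw [mem_closedBall_iff_norm] at hy
  have h := norm_sub_le (y + c) (y - c)
  rw [show y + c - (y - c) = (2 : ℝ) • c by rw [two_smul]; abel, norm_smul, Real.norm_two] at h
  linarith

lemma one_sub_mul_ne_zero_of_norm {u z : ℂ} (hu : ‖u‖ < 1) (hz : ‖z‖ ≤ 1) : 1 - u * z ≠ 0 :=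
  (Units.oneSub (u * z) (by
    rw [norm_mul]; exact mul_lt_one_of_nonneg_of_lt_one_left (norm_nonneg _) hu hz)).ne_zero

lemma one_sub_conj_mul_mul_div_mem_closedBall {u z : ℂ} (v : ℂ) (hu : ‖u‖ < 1) (hz : ‖z‖ ≤ 1) :
    (1 - conj u * u) * (1 - v * z) / (1 - u * z) ∈ closedBall (1 - conj u * v) ‖u - v‖ := by
  have hw := one_sub_mul_ne_zero_of_norm hu hz
  have hle : ‖z - conj u‖ ≤ ‖1 - u * z‖ := by
    simpa [norm_sub_rev] using
      norm_sub_le_norm_one_sub_conj_mul (a := conj u) (by simpa using hu.le) hz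
  rw [mem_closedBall_iff_norm]
  have hsplit : (1 - conj u * u) * (1 - v * z) / (1 - u * z) - (1 - conj u * v)
      = (u - v) * ((z - conj u) / (1 - u * z)) := by
    field_simp
    ring
  rw [hsplit, norm_mul, norm_div]
  exact mul_le_of_le_one_right (norm_nonneg _) (div_le_one_of_le₀ hle (norm_nonneg _))

lemma one_sub_mul_mul_one_sub_mul_add_ne_zero {u v z₁ z₂ : ℂ} (hu : ‖u‖ < 1) (hv : ‖v‖ < 1)
    (hz₁ : ‖z₁‖ ≤ 1) (hz₂ : ‖z₂‖ ≤ 1) :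
    (1 - u * z₁) * (1 - v * z₂) + (1 - u * z₂) * (1 - v * z₁) ≠ 0 := by
  intro hK
  refine add_ne_zero_of_mem_closedBall (norm_sub_lt_norm_one_sub_conj_mul hu hv)
    (one_sub_conj_mul_mul_div_mem_closedBall v hu hz₁)
    (one_sub_conj_mul_mul_div_mem_closedBall v hu hz₂) ?_
  have hw₁ := one_sub_mul_ne_zero_of_norm hu hz₁
  have hw₂ := one_sub_mul_ne_zero_of_norm hu hz₂
  have hsum : (1 - conj u * u) * (1 - v * z₁) / (1 - u * z₁)
        + (1 - conj u * u) * (1 - v * z₂) / (1 - u * z₂)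
      = (1 - conj u * u) * ((1 - u * z₁) * (1 - v * z₂) + (1 - u * z₂) * (1 - v * z₁))
        / ((1 - u * z₁) * (1 - u * z₂)) := by
    field_simp
    ring
  rw [hsum, hK, mul_zero, zero_div]

lemma norm_lt_one_of_mem_symBidisc {u v : ℂ} (h : (u + v, u * v) ∈ SymBidisc) : ‖u‖ < 1 := by
  by_contra! hu
  have hu₀ : u ≠ 0 := norm_pos_iff.mp (one_pos.trans_le hu)
  refine h u⁻¹ ?_ ?_
  · rw [mem_closedBall_zero_iff, norm_inv]
    exact inv_le_one_of_one_le₀ hu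
  · field_simp
    ring

lemma exists_of_mem_symBidisc {x : ℂ × ℂ} (h : x ∈ SymBidisc) :
    ∃ u v : ℂ, ‖u‖ < 1 ∧ ‖v‖ < 1 ∧ x = (u + v, u * v) := by
  obtain ⟨w, hw⟩ := IsAlgClosed.exists_pow_nat_eq (x.1 ^ 2 - 4 * x.2) two_pos
  have hx : x = ((x.1 + w) / 2 + (x.1 - w) / 2, (x.1 + w) / 2 * ((x.1 - w) / 2)) := by
    ext
    · ring
    · linear_combination (1 / 4 : ℂ) * hw
  refine ⟨_, _, ?_, ?_, hx⟩
  · exact norm_lt_one_of_mem_symBidisc (hx ▸ h)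
  · rw [hx, add_comm, mul_comm] at h
    exact norm_lt_one_of_mem_symBidisc h

lemma mapsTo_symBidisc_tetrablock :
    Set.MapsTo (fun x : ℂ × ℂ ↦ (x.1 / 2, x.1 / 2, x.2)) SymBidisc Tetrablock := by
  intro x hx z₁ hz₁ z₂ hz₂ hzero
  obtain ⟨u, v, hu, hv, rfl⟩ := exists_of_mem_symBidisc hx
  rw [mem_closedBall_zero_iff] at hz₁ hz₂
  apply one_sub_mul_mul_one_sub_mul_add_ne_zero hu hv hz₁ hz₂
  linear_combination 2 * hzero

lemma mapsTo_tetrablock_symBidisc :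
    Set.MapsTo (fun y : ℂ × ℂ × ℂ ↦ (y.1 + y.2.1, y.2.2)) Tetrablock SymBidisc := by
  intro y hy z hz hzero
  exact hy z hz z hz (by linear_combination hzero)

/-- `𝔾₂` is an analytic retract of the tetrablock `𝔼` via
`θ(s,p) = (s/2, s/2, p)` and `ι(x₁,x₂,x₃) = (x₁+x₂, x₃)`. -/
theorem symBidisc_analytic_retract_tetrablock :
    ∃ (θ : ℂ × ℂ → ℂ × ℂ × ℂ) (ι : ℂ × ℂ × ℂ → ℂ × ℂ),
      (∀ x : ℂ × ℂ, θ x = (x.1 / 2, x.1 / 2, x.2)) ∧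
      (∀ y : ℂ × ℂ × ℂ, ι y = (y.1 + y.2.1, y.2.2)) ∧
      Set.MapsTo θ SymBidisc Tetrablock ∧
      Set.MapsTo ι Tetrablock SymBidisc ∧
      DifferentiableOn ℂ θ SymBidisc ∧
      DifferentiableOn ℂ ι Tetrablock ∧
      ∀ x ∈ SymBidisc, ι (θ x) = x :=
  ⟨_, _, fun _ ↦ rfl, fun _ ↦ rfl, mapsTo_symBidisc_tetrablock, mapsTo_tetrablock_symBidisc,
    (by fun_prop : Differentiable ℂ _).differentiableOn,
    (by fun_prop : Differentiable ℂ _).differentiableOn,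
    fun x _ ↦ Prod.ext (add_halves x.1) rfl⟩
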